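/- Suppose the difference of aggregated features h_a − h_b of any pair (v_a, v_b) with v_a ∈ V₁ʸ, v_b ∈ V₀ʸ is distributed as N(u(μ₁ − μ₀)·1, (σ₁² + σ₀²) I_ζ). Then for any δ ∈ (0,1), with probability at least 1 − δ (ignoring the mean-centered cross term, i.e., under the approximation ‖h_a − h_b‖₂² ≈ ‖h_a − h_b − u(μ₁−μ₀)·1‖₂² + ζu²(μ₁−μ₀)²), the aggregated feature distance η_y = ‖h_a − h_b‖₂ for the extremal pair satisfies (σ₁² + σ₀²)ζ(1 − 2√(log(2/δ)/ζ)) + ζu²(μ₁ − μ₀)² ≤ η_y² ≤ (σ₁² + σ₀²)ζ(1 + 4√(log(2/δ)/ζ)) + ζu²(μ₁ − μ₀)², for ζ large enough. -/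

import Mathlib

open MeasureTheory ProbabilityTheory Real NNReal

/-!
`S = ∑ i, (d i - m) ^ 2` is `v` times a `χ²` variable with `ζ` degrees of freedom, so by the
Gaussian integral and independence `𝔼[exp (t S)] = (1 - 2 t v) ^ (-ζ / 2)` for `2 t v < 1`.
Chernoff's bound at `t = r / ((1 + 2 r) v)` and at `t = -r / v`, combined with
`√(1 + 2 r) ≤ exp r` and `exp (r - r ^ 2) ≤ √(1 + 2 r)` (from `2 x / (x + 2) ≤ log (1 + x)`),
bounds both tails `S ≥ v ζ (1 + 4 r)` and `S ≤ v ζ (1 - 2 r)` by `exp (-ζ r ^ 2)` as long as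
`0 ≤ r ≤ 1 / 2`. The choice `r = √(log (2 / δ) / ζ)` makes each tail `δ / 2`.
When `v = 0`, `S = 0` almost surely.
-/

lemma sqrt_one_add_two_mul_le_exp (r : ℝ) : √(1 + 2 * r) ≤ exp r := by
  rw [sqrt_le_left (exp_pos r).le, ← exp_nat_mul]
  push_cast
  linarith [add_one_le_exp (2 * r)]

lemma exp_sub_sq_le_sqrt_one_add_two_mul {r : ℝ} (hr : 0 ≤ r) :
    exp (r - r ^ 2) ≤ √(1 + 2 * r) := by
  rw [le_sqrt (exp_pos _).le (by linarith), ← exp_nat_mul, ← le_log_iff_exp_le (by linarith)]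
  refine le_trans ?_ (le_log_one_add_of_nonneg (by linarith : 0 ≤ 2 * r))
  rw [le_div_iff₀ (by linarith)]
  push_cast
  nlinarith [mul_nonneg hr (sq_nonneg r)]

lemma gaussianPDFReal_zero_mul_exp_mul_sq (v : ℝ≥0) (t x : ℝ) :
    gaussianPDFReal 0 v x * exp (t * x ^ 2)
      = (√(2 * π * v))⁻¹ * exp (-((2 * (v : ℝ))⁻¹ - t) * x ^ 2) := by
  rw [gaussianPDFReal, mul_assoc, ← exp_add]
  congr 2
  ring

lemma integral_exp_mul_sq_gaussianReal {v : ℝ≥0} (hv : v ≠ 0) {t : ℝ} (ht : 2 * t * v < 1) :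
    ∫ x, exp (t * x ^ 2) ∂gaussianReal 0 v = (√(1 - 2 * t * v))⁻¹ := by
  have hv' : (0 : ℝ) < v := by positivity
  simp_rw [integral_gaussianReal_eq_integral_smul hv, smul_eq_mul,
    gaussianPDFReal_zero_mul_exp_mul_sq, integral_const_mul, integral_gaussian]
  have : π / ((2 * (v : ℝ))⁻¹ - t) = 2 * π * v / (1 - 2 * t * v) := by
    field_simp
  rw [this, sqrt_div' _ (by linarith), div_eq_mul_inv,
    inv_mul_cancel_left₀ (by positivity)]

lemma integrable_exp_mul_sq_gaussianReal {v : ℝ≥0} (hv : v ≠ 0) {t : ℝ} (ht : 2 * t * v < 1) :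
    Integrable (fun x ↦ exp (t * x ^ 2)) (gaussianReal 0 v) :=
  Integrable.of_integral_ne_zero <| by
    rw [integral_exp_mul_sq_gaussianReal hv ht]
    exact (inv_pos.mpr (Real.sqrt_pos.mpr (by linarith))).ne'

section
variable {Ω : Type*} {mΩ : MeasurableSpace Ω} {P : Measure Ω} {m : ℝ} {v : ℝ≥0} {t r : ℝ}
  {ζ : ℕ} {d : Fin ζ → Ω → ℝ}

lemma map_sub_eq_gaussianReal_zero {X : Ω → ℝ} (hX : Measurable X)
    (hlaw : P.map X = gaussianReal m v) : P.map (fun ω ↦ X ω - m) = gaussianReal 0 v := by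
  simpa using (gaussianReal_sub_const ⟨hX.aemeasurable, hlaw⟩ m).map_eq

lemma integrable_exp_mul_sq_sub {X : Ω → ℝ} (hX : Measurable X)
    (hlaw : P.map X = gaussianReal m v) (hv : v ≠ 0) (ht : 2 * t * v < 1) :
    Integrable (fun ω ↦ exp (t * (X ω - m) ^ 2)) P := by
  have h := integrable_exp_mul_sq_gaussianReal hv ht
  rw [← map_sub_eq_gaussianReal_zero hX hlaw] at h
  exact h.comp_measurable (hX.sub_const m)

lemma mgf_sq_sub {X : Ω → ℝ} (hX : Measurable X)
    (hlaw : P.map X = gaussianReal m v) (hv : v ≠ 0) (ht : 2 * t * v < 1) :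
    mgf (fun ω ↦ (X ω - m) ^ 2) P t = (√(1 - 2 * t * v))⁻¹ := by
  rw [← integral_exp_mul_sq_gaussianReal hv ht, ← map_sub_eq_gaussianReal_zero hX hlaw,
    integral_map (hX.sub_const m).aemeasurable (by fun_prop)]
  rfl

lemma integrable_exp_mul_sum_sq_sub [IsFiniteMeasure P] (hindep : iIndepFun d P)
    (hmeas : ∀ i, Measurable (d i)) (hlaw : ∀ i, P.map (d i) = gaussianReal m v)
    (hv : v ≠ 0) (ht : 2 * t * v < 1) :
    Integrable (fun ω ↦ exp (t * ∑ i, (d i ω - m) ^ 2)) P := by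
  have h := (hindep.comp (fun _ x ↦ (x - m) ^ 2) (fun _ ↦ by fun_prop)).integrable_exp_mul_sum
    (fun i ↦ by fun_prop) (s := Finset.univ)
    (fun i _ ↦ integrable_exp_mul_sq_sub (hmeas i) (hlaw i) hv ht)
  simpa [Finset.sum_apply] using h

lemma mgf_sum_sq_sub (hindep : iIndepFun d P) (hmeas : ∀ i, Measurable (d i))
    (hlaw : ∀ i, P.map (d i) = gaussianReal m v) (hv : v ≠ 0) (ht : 2 * t * v < 1) :
    mgf (fun ω ↦ ∑ i, (d i ω - m) ^ 2) P t = (√(1 - 2 * t * v))⁻¹ ^ ζ := by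
  have h := (hindep.comp (fun _ x ↦ (x - m) ^ 2) (fun _ ↦ by fun_prop)).mgf_sum
    (fun i ↦ by fun_prop) Finset.univ (t := t)
  simp_rw [Function.comp_def, mgf_sq_sub (hmeas _) (hlaw _) hv ht] at h
  simpa [Finset.sum_fn] using h

lemma measureReal_sum_sq_sub_ge_le_exp [IsFiniteMeasure P] (hindep : iIndepFun d P)
    (hmeas : ∀ i, Measurable (d i)) (hlaw : ∀ i, P.map (d i) = gaussianReal m v)
    (hv : v ≠ 0) (hr₀ : 0 ≤ r) (hr : r ≤ 1 / 2) :
    P.real {ω | v * ζ * (1 + 4 * r) ≤ ∑ i, (d i ω - m) ^ 2} ≤ exp (-(ζ * r ^ 2)) := by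
  have hv' : (0 : ℝ) < v := by positivity
  set t := r / ((1 + 2 * r) * v)
  have ht : 1 - 2 * t * v = (1 + 2 * r)⁻¹ := by
    simp only [t]
    field_simp
    ring
  have ht₁ : 2 * t * v < 1 := by
    linarith [ht ▸ inv_pos.mpr (by linarith : (0 : ℝ) < 1 + 2 * r)]
  calc _ ≤ exp (-t * (v * ζ * (1 + 4 * r))) * mgf (fun ω ↦ ∑ i, (d i ω - m) ^ 2) P t :=
        measure_ge_le_exp_mul_mgf _ (by positivity)
          (integrable_exp_mul_sum_sq_sub hindep hmeas hlaw hv ht₁)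
    _ = exp (-t * (v * ζ * (1 + 4 * r))) * √(1 + 2 * r) ^ ζ := by
        rw [mgf_sum_sq_sub hindep hmeas hlaw hv ht₁, ht, Real.sqrt_inv, inv_inv]
    _ ≤ exp (-t * (v * ζ * (1 + 4 * r))) * exp r ^ ζ := by
        gcongr
        exact sqrt_one_add_two_mul_le_exp r
    _ = exp (-(ζ * r ^ 2) - ζ * r ^ 2 * (1 - 2 * r) / (1 + 2 * r)) := by
        rw [← exp_nat_mul, ← exp_add]
        congr 1
        simp only [t]
        field_simp
        ring
    _ ≤ exp (-(ζ * r ^ 2)) := by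
        gcongr
        refine sub_le_self _ (div_nonneg (mul_nonneg (by positivity) ?_) (by linarith))
        linarith

lemma measureReal_sum_sq_sub_le_le_exp [IsFiniteMeasure P] (hindep : iIndepFun d P)
    (hmeas : ∀ i, Measurable (d i)) (hlaw : ∀ i, P.map (d i) = gaussianReal m v)
    (hv : v ≠ 0) (hr₀ : 0 ≤ r) :
    P.real {ω | ∑ i, (d i ω - m) ^ 2 ≤ v * ζ * (1 - 2 * r)} ≤ exp (-(ζ * r ^ 2)) := by
  have hv' : (0 : ℝ) < v := by positivity
  set t := -(r / v)
  have ht : 1 - 2 * t * v = 1 + 2 * r := by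
    simp only [t]
    field_simp
    ring
  have ht₁ : 2 * t * v < 1 := by linarith
  calc _ ≤ exp (-t * (v * ζ * (1 - 2 * r))) * mgf (fun ω ↦ ∑ i, (d i ω - m) ^ 2) P t :=
        measure_le_le_exp_mul_mgf _ (by simp only [t, neg_nonpos]; positivity)
          (integrable_exp_mul_sum_sq_sub hindep hmeas hlaw hv ht₁)
    _ = exp (-t * (v * ζ * (1 - 2 * r))) * (√(1 + 2 * r))⁻¹ ^ ζ := by
        rw [mgf_sum_sq_sub hindep hmeas hlaw hv ht₁, ht]
    _ ≤ exp (-t * (v * ζ * (1 - 2 * r))) * exp (r ^ 2 - r) ^ ζ := by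
        gcongr
        rw [← neg_sub, exp_neg]
        exact inv_anti₀ (exp_pos _) (exp_sub_sq_le_sqrt_one_add_two_mul hr₀)
    _ = exp (-(ζ * r ^ 2)) := by
        rw [← exp_nat_mul, ← exp_add]
        congr 1
        simp only [t]
        field_simp
        ring

lemma ae_sum_sq_sub_eq_zero (hmeas : ∀ i, Measurable (d i))
    (hlaw : ∀ i, P.map (d i) = gaussianReal m 0) :
    ∀ᵐ ω ∂P, ∑ i, (d i ω - m) ^ 2 = 0 := by
  have h (i : Fin ζ) : ∀ᵐ ω ∂P, d i ω = m := by
    refine ae_of_ae_map (p := (· = m)) (hmeas i).aemeasurable ?_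
    rw [hlaw i, gaussianReal_zero_var, ae_dirac_eq, Filter.eventually_pure]
  filter_upwards [ae_all_iff.mpr h] with ω hω
  simp [hω]

end

lemma one_sub_add_le_measureReal_of_tails {Ω : Type*} {mΩ : MeasurableSpace Ω} {P : Measure Ω}
    [IsProbabilityMeasure P] {X : Ω → ℝ} {a b ε₁ ε₂ : ℝ}
    (ha : P.real {ω | X ω ≤ a} ≤ ε₁) (hb : P.real {ω | b ≤ X ω} ≤ ε₂) :
    1 - (ε₁ + ε₂) ≤ P.real {ω | a ≤ X ω ∧ X ω ≤ b} := by
  set E := {ω | a ≤ X ω ∧ X ω ≤ b}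
  have hE : 1 ≤ P.real E + P.real Eᶜ := by
    simpa using measureReal_union_le (μ := P) E Eᶜ
  have hEc : Eᶜ ⊆ {ω | X ω ≤ a} ∪ {ω | b ≤ X ω} := by
    intro ω hω
    simp only [E, Set.mem_compl_iff, Set.mem_ofPred_eq, not_and_or, not_le] at hω
    exact hω.imp le_of_lt le_of_lt
  linarith [(measureReal_mono (μ := P) hEc).trans (measureReal_union_le _ _)]

/-- Theorem 3.5 of the paper: two-sided bound on the (approximated) squared aggregated
feature distance `η_y²` between sensitive groups, where the coordinates of `h_a − h_b`
are i.i.d. `N(u(μ₁ − μ₀), σ₁² + σ₀²)` and, following the paper's approximation,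
`η_y² ≈ ‖h_a − h_b − u(μ₁−μ₀)·1‖₂² + ζ u² (μ₁−μ₀)²`. -/
theorem aggregated_feature_distance_bound
    {Ω : Type*} [MeasureSpace Ω] [IsProbabilityMeasure (ℙ : Measure Ω)]
    {ζ : ℕ} (u μ₁ μ₀ σ₁ σ₀ : ℝ) (v : ℝ≥0) (hv : (v : ℝ) = σ₁^2 + σ₀^2)
    (d : Fin ζ → Ω → ℝ)
    (hindep : iIndepFun d ℙ)
    (hmeas : ∀ i, Measurable (d i))
    (hlaw : ∀ i, Measure.map (d i) ℙ = gaussianReal (u * (μ₁ - μ₀)) v)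
    (δ : ℝ) (hδ : δ ∈ Set.Ioo (0:ℝ) 1)
    (hζ : 4 * Real.log (2/δ) ≤ (ζ : ℝ)) :
    ENNReal.ofReal (1 - δ) ≤
      ℙ {ω |
        (σ₁^2 + σ₀^2) * ζ * (1 - 2 * Real.sqrt (Real.log (2/δ) / ζ))
            + ζ * u^2 * (μ₁ - μ₀)^2
          ≤ (∑ i, (d i ω - u * (μ₁ - μ₀))^2) + ζ * u^2 * (μ₁ - μ₀)^2
        ∧ (∑ i, (d i ω - u * (μ₁ - μ₀))^2) + ζ * u^2 * (μ₁ - μ₀)^2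
          ≤ (σ₁^2 + σ₀^2) * ζ * (1 + 4 * Real.sqrt (Real.log (2/δ) / ζ))
              + ζ * u^2 * (μ₁ - μ₀)^2} := by
  obtain ⟨hδ₀, hδ₁⟩ := hδ
  simp only [← hv, add_le_add_iff_right]
  set L := log (2 / δ)
  have hL : 0 < L := log_pos (by rw [lt_div_iff₀ hδ₀]; linarith)
  have hζ₀ : (0 : ℝ) < ζ := by linarith
  set r := √(L / ζ)
  have hζr : ζ * r ^ 2 = L := by
    rw [Real.sq_sqrt (by positivity)]
    field_simp
  have hr : r ≤ 1 / 2 := by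
    rw [sqrt_le_left (by norm_num), div_le_iff₀ hζ₀]
    linarith
  have htail : exp (-(ζ * r ^ 2)) = δ / 2 := by
    rw [hζr, exp_neg, exp_log (by positivity), inv_div]
  rcases eq_or_ne v 0 with rfl | hv₀
  · refine (ENNReal.ofReal_le_one.mpr (by linarith)).trans (le_of_eq ?_)
    refine ((measure_congr (ae_eq_univ.mpr (mem_ae_iff.mp ?_))).trans measure_univ).symm
    filter_upwards [ae_sum_sq_sub_eq_zero hmeas hlaw] with ω hω
    simp [hω]
  · refine ENNReal.ofReal_le_of_le_toReal (le_of_eq_of_le ?_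
      (one_sub_add_le_measureReal_of_tails (ε₁ := δ / 2) (ε₂ := δ / 2) ?_ ?_))
    · ring
    · exact (measureReal_sum_sq_sub_le_le_exp hindep hmeas hlaw hv₀ (sqrt_nonneg _)).trans
        htail.le
    · exact (measureReal_sum_sq_sub_ge_le_exp hindep hmeas hlaw hv₀ (sqrt_nonneg _) hr).trans
        htail.le
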